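/- arXiv:2106.02938 — 3 statements merged into one kernel-verified Lean document; each statement's English description precedes it below -/
import Mathlib

section
/- The Shapley value of player i, defined as Sh_i = Σ_{S⊆N\{i}} [F(S∪{i}) - F(S)] · |S|!(n-|S|-1)!/n!, equals the integral along the main diagonal of the unit cube of the i-th partial derivative of the multilinear extension: Sh_i = ∫_0^1 ∇_i f_mt(x·𝟏) dx. -/
open Finset

noncomputable def mlext (n : ℕ) (F : Finset (Fin n) → ℝ) (x : Fin n → ℝ) : ℝ :=
  ∑ S : Finset (Fin n), F S * (∏ i ∈ S, x i) * ∏ j ∈ Sᶜ, (1 - x j)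

noncomputable def partialDeriv1 (n : ℕ) (i : Fin n)
    (f : (Fin n → ℝ) → ℝ) (x : Fin n → ℝ) : ℝ :=
  deriv (fun t => f (Function.update x i t)) (x i)


noncomputable def shapley (n : ℕ) (F : Finset (Fin n) → ℝ) (i : Fin n) : ℝ :=
  ∑ S ∈ (Finset.univ.erase i).powerset,
    (F (insert i S) - F S) *
      ((Nat.factorial S.card * Nat.factorial (n - S.card - 1) : ℝ) / Nat.factorial n)


/-!
Splitting the subsets of `N` according to whether they contain `i` shows that `f_mt` is affine
in `x_i`, with slope
`∑_{S ⊆ N \ {i}} (F(S ∪ {i}) - F(S)) ∏_{j ∈ S} x_j ∏_{j ∉ S ∪ {i}} (1 - x_j)`.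
On the diagonal the weight of `S` is `x^|S| (1 - x)^(n - |S| - 1)`, and Euler's Beta integral
turns its integral over `[0, 1]` into the Shapley coefficient `|S|! (n - |S| - 1)! / n!`.
-/

open scoped Nat

lemma integral_pow_mul_one_sub_pow (a b : ℕ) :
    ∫ x in (0:ℝ)..1, x ^ a * (1 - x) ^ b = (a ! * b ! : ℝ) / (a + b + 1)! := by
  have h := Complex.betaIntegral_eq_Gamma_mul_div (a + 1) (b + 1)
    (by norm_cast; omega) (by norm_cast; omega)
  rw [show (a + 1 + (b + 1) : ℂ) = ↑(a + b + 1) + 1 by push_cast; ring,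
    Complex.Gamma_nat_eq_factorial, Complex.Gamma_nat_eq_factorial,
    Complex.Gamma_nat_eq_factorial, Complex.betaIntegral] at h
  simp only [add_sub_cancel_right, Complex.cpow_natCast] at h
  rw [← Complex.ofReal_inj, ← intervalIntegral.integral_ofReal]
  push_cast
  exact h

section SubsetWeight

variable {ι : Type*} [DecidableEq ι]

/-- The probability that a random subset of `s`, containing each `j` independently with
probability `x j`, equals `S`. -/
noncomputable def subsetWeight (s : Finset ι) (x : ι → ℝ) (S : Finset ι) : ℝ :=
  (∏ j ∈ S, x j) * ∏ j ∈ s \ S, (1 - x j)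

lemma subsetWeight_update_of_notMem {s S : Finset ι} {i : ι} (hi : i ∉ s) (hS : S ⊆ s)
    (x : ι → ℝ) (t : ℝ) : subsetWeight s (Function.update x i t) S = subsetWeight s x S := by
  have hx : ∀ j ∈ s, Function.update x i t j = x j := fun j hj =>
    Function.update_of_ne (ne_of_mem_of_not_mem hj hi) t x
  unfold subsetWeight
  rw [prod_congr rfl fun j hj => hx j (hS hj),
    prod_congr rfl fun j hj => congrArg (1 - ·) (hx j (sdiff_subset hj))]

lemma subsetWeight_const {s S : Finset ι} (hS : S ⊆ s) (x : ℝ) :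
    subsetWeight s (fun _ => x) S = x ^ #S * (1 - x) ^ (#s - #S) := by
  rw [subsetWeight, prod_const, prod_const, card_sdiff_of_subset hS]

end SubsetWeight

lemma mlext_eq_sum_powerset_erase {n : ℕ} (F : Finset (Fin n) → ℝ) (i : Fin n)
    (x : Fin n → ℝ) :
    mlext n F x = ∑ S ∈ (univ.erase i).powerset,
      (F (insert i S) * x i + F S * (1 - x i)) * subsetWeight (univ.erase i) x S := by
  have huniv : (univ : Finset (Fin n)) = insert i (univ.erase i) := (insert_erase (mem_univ i)).symm
  rw [mlext, ← powerset_univ]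
  conv_lhs => rw [huniv, sum_powerset_insert (notMem_erase i _), ← sum_add_distrib]
  refine sum_congr rfl fun S hS => ?_
  have hiS : i ∉ S := fun h => notMem_erase i _ (mem_powerset.mp hS h)
  have hcomplS : Sᶜ = insert i (univ.erase i \ S) := by ext j; by_cases j = i <;> simp_all
  have hcomplIns : (insert i S)ᶜ = univ.erase i \ S := by ext j; by_cases j = i <;> simp_all
  rw [prod_insert hiS, hcomplS, hcomplIns, prod_insert (by simp), subsetWeight]
  ring

lemma hasDerivAt_mlext_update {n : ℕ} (F : Finset (Fin n) → ℝ) (i : Fin n)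
    (x : Fin n → ℝ) (t : ℝ) :
    HasDerivAt (fun t => mlext n F (Function.update x i t))
      (∑ S ∈ (univ.erase i).powerset, (F (insert i S) - F S) * subsetWeight (univ.erase i) x S)
      t := by
  have hmlext : (fun t => mlext n F (Function.update x i t)) = fun t =>
      ∑ S ∈ (univ.erase i).powerset,
        (F (insert i S) * t + F S * (1 - t)) * subsetWeight (univ.erase i) x S := by
    funext t
    rw [mlext_eq_sum_powerset_erase F i]
    refine sum_congr rfl fun S hS => ?_
    rw [Function.update_self,
      subsetWeight_update_of_notMem (notMem_erase i _) (mem_powerset.mp hS)]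
  rw [hmlext]
  refine HasDerivAt.fun_sum fun S _ => HasDerivAt.mul_const ?_ _
  have h := ((hasDerivAt_id' t).const_mul (F (insert i S))).fun_add
    (((hasDerivAt_id' t).const_sub 1).const_mul (F S))
  rwa [mul_one, mul_neg_one, ← sub_eq_add_neg] at h

lemma partialDeriv1_mlext {n : ℕ} (F : Finset (Fin n) → ℝ) (i : Fin n) (x : Fin n → ℝ) :
    partialDeriv1 n i (mlext n F) x =
      ∑ S ∈ (univ.erase i).powerset, (F (insert i S) - F S) * subsetWeight (univ.erase i) x S :=
  (hasDerivAt_mlext_update F i x (x i)).deriv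

lemma partialDeriv1_mlext_const {n : ℕ} (F : Finset (Fin n) → ℝ) (i : Fin n) (x : ℝ) :
    partialDeriv1 n i (mlext n F) (fun _ => x) = ∑ S ∈ (univ.erase i).powerset,
      (F (insert i S) - F S) * (x ^ #S * (1 - x) ^ (n - #S - 1)) := by
  rw [partialDeriv1_mlext]
  refine sum_congr rfl fun S hS => ?_
  rw [subsetWeight_const (mem_powerset.mp hS), card_erase_of_mem (mem_univ i), card_univ,
    Fintype.card_fin, Nat.sub_right_comm]

theorem stmt3 (n : ℕ) (F : Finset (Fin n) → ℝ) (i : Fin n) :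
    shapley n F i = ∫ x in (0:ℝ)..1, partialDeriv1 n i (mlext n F) (fun _ => x) := by
  simp_rw [partialDeriv1_mlext_const]
  rw [intervalIntegral.integral_finsetSum fun S _ =>
    (by fun_prop : Continuous _).intervalIntegrable _ _, shapley]
  refine sum_congr rfl fun S hS => ?_
  have hcard : #S + (n - #S - 1) + 1 = n := by
    have hle := card_le_card (mem_powerset.mp hS)
    rw [card_erase_of_mem (mem_univ i), card_univ, Fintype.card_fin] at hle
    have := i.pos
    omega
  rw [intervalIntegral.integral_const_mul, integral_pow_mul_one_sub_pow, hcard]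
end

section
/- For any coalition S, ∫_0^1 Δ_S f_mt(x·𝟏) dx = Σ_{T⊇S} a(T)/(|T|-|S|+1), where a is the Möbius transform of F; i.e., the line integral of the S-derivative of the multilinear extension along the main diagonal equals the Shapley interaction index of S. -/
open Finset

noncomputable def mobius (n : ℕ) (F : Finset (Fin n) → ℝ) (S : Finset (Fin n)) : ℝ :=
  ∑ T ∈ S.powerset, (-1 : ℝ) ^ (S.card - T.card) * F T

noncomputable def mixedDeriv (n : ℕ) (S : Finset (Fin n))
    (f : (Fin n → ℝ) → ℝ) : (Fin n → ℝ) → ℝ :=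
  S.toList.foldr (fun i g => partialDeriv1 n i g) f

/-! Auxiliary development -/

noncomputable def poly (n : ℕ) (d : Finset (Fin n) → ℝ) (x : Fin n → ℝ) : ℝ :=
  ∑ T : Finset (Fin n), d T * ∏ j ∈ T, x j

noncomputable def dstep (n : ℕ) (i : Fin n) (d : Finset (Fin n) → ℝ) :
    Finset (Fin n) → ℝ :=
  fun T => if i ∈ T then 0 else d (insert i T)

lemma prod_update_eq (n : ℕ) (i : Fin n) (x : Fin n → ℝ) (t : ℝ) (T : Finset (Fin n)) :
    (∏ j ∈ T, Function.update x i t j)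
      = if i ∈ T then t * ∏ j ∈ T.erase i, x j else ∏ j ∈ T, x j := by
  by_cases h : i ∈ T
  · simp only [h, if_true]
    rw [← Finset.mul_prod_erase T _ h, Function.update_self]
    congr 1
    exact Finset.prod_congr rfl fun j hj =>
      Function.update_of_ne (Finset.ne_of_mem_erase hj) _ _
  · simp only [h, if_false]
    exact Finset.prod_congr rfl fun j hj =>
      Function.update_of_ne (by rintro rfl; exact h hj) _ _

lemma ite_sum_swap (n : ℕ) (i : Fin n) (f g : Finset (Fin n) → ℝ)
    (hf : ∀ T, i ∈ T → f T = g (T.erase i)) :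
    (∑ T : Finset (Fin n), if i ∈ T then f T else 0)
      = ∑ T : Finset (Fin n), if i ∈ T then 0 else g T := by
  have hr : (∑ T : Finset (Fin n), if i ∈ T then 0 else g T)
      = ∑ T ∈ Finset.univ.filter (fun T => i ∉ T), g T := by
    rw [Finset.sum_filter]
    exact Finset.sum_congr rfl fun T _ => by by_cases h : i ∈ T <;> simp [h]
  rw [← Finset.sum_filter, hr]
  refine Finset.sum_nbij' (fun T => T.erase i) (fun T => insert i T) ?_ ?_ ?_ ?_ ?_
  · intro T hT; simp at hT ⊢
  · intro T hT; simp at hT ⊢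
  · intro T hT; simp at hT; exact Finset.insert_erase hT
  · intro T hT; simp at hT; exact Finset.erase_insert hT
  · intro T hT; simp at hT; exact hf T hT

lemma pderiv_poly (n : ℕ) (i : Fin n) (d : Finset (Fin n) → ℝ) :
    partialDeriv1 n i (poly n d) = poly n (dstep n i d) := by
  funext x
  unfold partialDeriv1 poly
  have key : (fun t => ∑ T : Finset (Fin n), d T * ∏ j ∈ T, Function.update x i t j)
      = fun t => ∑ T : Finset (Fin n),
          (if i ∈ T then d T * (t * ∏ j ∈ T.erase i, x j) else d T * ∏ j ∈ T, x j) := by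
    funext t
    refine Finset.sum_congr rfl fun T _ => ?_
    rw [prod_update_eq]
    by_cases h : i ∈ T <;> simp [h]
  rw [key]
  rw [deriv_fun_sum]
  · have : ∀ T : Finset (Fin n),
        deriv (fun t => if i ∈ T then d T * (t * ∏ j ∈ T.erase i, x j)
          else d T * ∏ j ∈ T, x j) (x i)
        = if i ∈ T then d T * ∏ j ∈ T.erase i, x j else 0 := by
      intro T
      by_cases h : i ∈ T
      · simp only [h, if_true]
        have : (fun t => d T * (t * ∏ j ∈ T.erase i, x j))
            = fun t => (d T * ∏ j ∈ T.erase i, x j) * t := by funext t; ring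
        rw [this]
        simpa using ((hasDerivAt_id (x i)).const_mul (d T * ∏ j ∈ T.erase i, x j)).deriv
      · simp [h]
    rw [Finset.sum_congr rfl fun T _ => this T]
    rw [ite_sum_swap n i _ (fun T => d (insert i T) * ∏ j ∈ T, x j) ?_]
    · refine Finset.sum_congr rfl fun T _ => ?_
      unfold dstep
      by_cases h : i ∈ T <;> simp [h]
    · intro T hT
      congr 2
      · rw [Finset.insert_erase hT]
  · intro T _
    by_cases h : i ∈ T
    · simp only [h, if_true]
      fun_prop
    · simp only [h, if_false]
      fun_prop

lemma foldr_pderiv (n : ℕ) (L : List (Fin n)) (d : Finset (Fin n) → ℝ) :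
    L.foldr (fun i g => partialDeriv1 n i g) (poly n d)
      = poly n (L.foldr (dstep n) d) := by
  induction L with
  | nil => rfl
  | cons a l ih => simp [List.foldr_cons, ih, pderiv_poly]

lemma foldr_dstep (n : ℕ) (L : List (Fin n)) (hL : L.Nodup) (d : Finset (Fin n) → ℝ)
    (T : Finset (Fin n)) :
    L.foldr (dstep n) d T
      = if Disjoint L.toFinset T then d (L.toFinset ∪ T) else 0 := by
  induction L generalizing T with
  | nil => simp
  | cons a l ih =>
    have hal : a ∉ l := (List.nodup_cons.mp hL).1
    have hln : l.Nodup := (List.nodup_cons.mp hL).2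
    simp only [List.foldr_cons, dstep]
    by_cases h : a ∈ T
    · simp only [h, if_true]
      rw [if_neg]
      intro hd
      exact (Finset.disjoint_left.mp hd (by simp)) h
    · simp only [h, if_false, ih hln]
      simp only [List.toFinset_cons]
      have hs : l.toFinset ∪ insert a T = insert a l.toFinset ∪ T := by
        rw [Finset.union_insert, Finset.insert_union]
      have hd : Disjoint l.toFinset (insert a T) ↔ Disjoint (insert a l.toFinset) T := by
        rw [Finset.disjoint_insert_right, Finset.disjoint_insert_left]
        simp [hal, h]
      rw [hs]
      by_cases hD : Disjoint (insert a l.toFinset) T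
      · rw [if_pos (hd.mpr hD), if_pos hD]
      · rw [if_neg (fun c => hD (hd.mp c)), if_neg hD]

lemma disj_of_subset_compl {n : ℕ} {A U : Finset (Fin n)} (hU : U ⊆ Aᶜ) :
    Disjoint A U := by
  rw [Finset.subset_compl_comm] at hU
  exact Finset.disjoint_left.mpr fun a ha hb => (Finset.mem_compl.mp (hU ha)) hb

lemma mlext_eq_poly (n : ℕ) (F : Finset (Fin n) → ℝ) :
    mlext n F = poly n (mobius n F) := by
  funext x
  unfold mlext poly mobius
  have expand : ∀ A : Finset (Fin n), (∏ j ∈ Aᶜ, (1 - x j))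
      = ∑ U ∈ Aᶜ.powerset, (-1 : ℝ) ^ U.card * ∏ j ∈ U, x j := by
    intro A
    have : ∀ j ∈ Aᶜ, (1 : ℝ) - x j = -x j + 1 := fun j _ => by ring
    rw [Finset.prod_congr rfl this, Finset.prod_add]
    refine Finset.sum_congr rfl fun U _ => ?_
    rw [Finset.prod_const_one, mul_one]
    rw [← Finset.prod_const, ← Finset.prod_mul_distrib]
    exact Finset.prod_congr rfl fun j _ => by ring
  calc (∑ A : Finset (Fin n), F A * (∏ i ∈ A, x i) * ∏ j ∈ Aᶜ, (1 - x j))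
      = ∑ A : Finset (Fin n), ∑ U ∈ Aᶜ.powerset,
          F A * ((-1 : ℝ) ^ U.card) * ∏ i ∈ A ∪ U, x i := by
        refine Finset.sum_congr rfl fun A _ => ?_
        rw [expand, Finset.mul_sum]
        refine Finset.sum_congr rfl fun U hU => ?_
        have hdisj : Disjoint A U := by
          rw [Finset.mem_powerset] at hU
          exact disj_of_subset_compl hU
        rw [Finset.prod_union hdisj]
        ring
    _ = ∑ T : Finset (Fin n), (∑ R ∈ T.powerset,
          (-1 : ℝ) ^ (T.card - R.card) * F R) * ∏ j ∈ T, x j := by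
        rw [Finset.sum_sigma' Finset.univ (fun A => Aᶜ.powerset)
          (fun A U => F A * ((-1 : ℝ) ^ U.card) * ∏ i ∈ A ∪ U, x i)]
        conv_rhs => rw [show (fun T : Finset (Fin n) => (∑ R ∈ T.powerset,
            (-1 : ℝ) ^ (T.card - R.card) * F R) * ∏ j ∈ T, x j)
          = fun T => ∑ R ∈ T.powerset, (-1 : ℝ) ^ (T.card - R.card) * F R * ∏ j ∈ T, x j
          from funext fun T => by rw [Finset.sum_mul]]
        rw [Finset.sum_sigma' Finset.univ (fun T => T.powerset)
          (fun T R => (-1 : ℝ) ^ (T.card - R.card) * F R * ∏ j ∈ T, x j)]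
        refine Finset.sum_nbij' (fun p => ⟨p.1 ∪ p.2, p.1⟩) (fun q => ⟨q.2, q.1 \ q.2⟩)
          ?_ ?_ ?_ ?_ ?_
        · rintro ⟨A, U⟩ hp
          simp only [Finset.mem_sigma, Finset.mem_univ, Finset.mem_powerset, true_and] at hp ⊢
          exact Finset.subset_union_left
        · rintro ⟨T, R⟩ hq
          simp only [Finset.mem_sigma, Finset.mem_univ, Finset.mem_powerset, true_and] at hq ⊢
          exact fun a ha => Finset.mem_compl.mpr (Finset.mem_sdiff.mp ha).2
        · rintro ⟨A, U⟩ hp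
          simp only [Finset.mem_sigma, Finset.mem_univ, Finset.mem_powerset, true_and] at hp
          have hdisj : Disjoint A U := disj_of_subset_compl hp
          simp [Finset.union_sdiff_cancel_left hdisj]
        · rintro ⟨T, R⟩ hq
          simp only [Finset.mem_sigma, Finset.mem_univ, Finset.mem_powerset, true_and] at hq
          simp [Finset.union_sdiff_of_subset hq]
        · rintro ⟨A, U⟩ hp
          simp only [Finset.mem_sigma, Finset.mem_univ, Finset.mem_powerset, true_and] at hp
          have hdisj : Disjoint A U := disj_of_subset_compl hp
          have hc : (A ∪ U).card - A.card = U.card := by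
            rw [Finset.card_union_of_disjoint hdisj]; omega
          simp only [hc]
          ring

theorem stmt6 (n : ℕ) (F : Finset (Fin n) → ℝ) (S : Finset (Fin n)) :
    (∫ x in (0:ℝ)..1, mixedDeriv n S (mlext n F) (fun _ => x)) =
      ∑ T ∈ Finset.univ.powerset.filter (fun T => S ⊆ T),
        mobius n F T / ((T.card : ℝ) - S.card + 1) := by
  have h1 : mixedDeriv n S (mlext n F)
      = poly n (S.toList.foldr (dstep n) (mobius n F)) := by
    rw [mixedDeriv, mlext_eq_poly]
    exact foldr_pderiv n S.toList (mobius n F)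
  have h2 : ∀ x : ℝ, mixedDeriv n S (mlext n F) (fun _ => x)
      = ∑ T ∈ Finset.univ.filter (fun T => Disjoint S T),
          mobius n F (S ∪ T) * x ^ T.card := by
    intro x
    rw [h1]
    unfold poly
    rw [Finset.sum_filter]
    refine Finset.sum_congr rfl fun T _ => ?_
    rw [foldr_dstep n S.toList (Finset.nodup_toList S) (mobius n F) T,
      Finset.toList_toFinset, Finset.prod_const]
    by_cases h : Disjoint S T <;> simp [h]
  rw [intervalIntegral.integral_congr (g := fun x =>
      ∑ T ∈ Finset.univ.filter (fun T => Disjoint S T),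
        mobius n F (S ∪ T) * x ^ T.card) (fun x _ => h2 x)]
  rw [intervalIntegral.integral_finset_sum (fun T _ =>
    (Continuous.intervalIntegrable (by fun_prop) 0 1))]
  have hint : ∀ (c : ℝ) (k : ℕ), (∫ x in (0:ℝ)..1, c * x ^ k) = c / ((k : ℝ) + 1) := by
    intro c k
    rw [intervalIntegral.integral_const_mul, integral_pow]
    simp [div_eq_mul_inv]
  rw [Finset.sum_congr rfl fun T _ => hint (mobius n F (S ∪ T)) T.card,
    Finset.powerset_univ]
  refine Finset.sum_nbij' (fun T => S ∪ T) (fun T => T \ S) ?_ ?_ ?_ ?_ ?_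
  · intro T hT
    simp only [Finset.mem_filter, Finset.mem_univ, true_and] at hT ⊢
    exact Finset.subset_union_left
  · intro T hT
    simp only [Finset.mem_filter, Finset.mem_univ, true_and] at hT ⊢
    exact Finset.disjoint_sdiff
  · intro T hT
    simp only [Finset.mem_filter, Finset.mem_univ, true_and] at hT
    exact Finset.union_sdiff_cancel_left hT
  · intro T hT
    simp only [Finset.mem_filter, Finset.mem_univ, true_and] at hT
    exact Finset.union_sdiff_of_subset hT
  · intro T hT
    simp only [Finset.mem_filter, Finset.mem_univ, true_and] at hT
    have hc : (S ∪ T).card = S.card + T.card := Finset.card_union_of_disjoint hT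
    rw [hc]
    push_cast
    ring_nf
end

section
/- (Symmetry axiom for K-step variational values.) Suppose players i and i' are symmetric in the game, i.e., F(S∪{i}) = F(S∪{i'}) for all S ⊆ N\{i,i'}. If the fixed-point iteration x^{(k)} = σ(∇ f_mt(x^{(k-1)})/T) is initialized uniformly, x^{(0)} = x·𝟏 for some x ∈ (0,1), then for every k ≥ 0, x^{(k)}_i = x^{(k)}_{i'}; in particular the K-step variational values of i and i' coincide for all K. -/
open Finset

noncomputable def sigmoid (t : ℝ) : ℝ := 1 / (1 + Real.exp (-t))

noncomputable def logit (y : ℝ) : ℝ := Real.log (y / (1 - y))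

noncomputable def mfi (n : ℕ) (F : Finset (Fin n) → ℝ) (T : ℝ)
    (x : Fin n → ℝ) : ℕ → Fin n → ℝ
  | 0 => x
  | k + 1 => fun i => sigmoid (partialDeriv1 n i (mlext n F) (mfi n F T x k) / T)

section aux

variable {n : ℕ} {F : Finset (Fin n) → ℝ} {i i' : Fin n}

lemma aux_F_swap (hii' : i ≠ i')
    (hsym : ∀ S : Finset (Fin n), i ∉ S → i' ∉ S → F (insert i S) = F (insert i' S))
    (S : Finset (Fin n)) : F (S.image (Equiv.swap i i')) = F S := by
  have hinj : Function.Injective (Equiv.swap i i') := (Equiv.swap i i').injective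
  by_cases hi : i ∈ S <;> by_cases hi' : i' ∈ S
  · -- both in S : image = S
    have hsub : S.image (Equiv.swap i i') ⊆ S := by
      intro a ha
      rcases Finset.mem_image.1 ha with ⟨b, hb, rfl⟩
      rcases eq_or_ne b i with rfl | hbi
      · simpa [Equiv.swap_apply_left] using hi'
      rcases eq_or_ne b i' with rfl | hbi'
      · simpa [Equiv.swap_apply_right] using hi
      · simpa [Equiv.swap_apply_of_ne_of_ne hbi hbi'] using hb
    have : S.image (Equiv.swap i i') = S :=
      Finset.eq_of_subset_of_card_le hsub (by rw [Finset.card_image_of_injective _ hinj])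
    rw [this]
  · -- i ∈ S, i' ∉ S
    have h1 : S.image (Equiv.swap i i') = insert i' (S.erase i) := by
      ext a
      simp only [Finset.mem_image, Finset.mem_insert, Finset.mem_erase]
      constructor
      · rintro ⟨b, hb, rfl⟩
        rcases eq_or_ne b i with rfl | hbi
        · left; simp [Equiv.swap_apply_left]
        rcases eq_or_ne b i' with rfl | hbi'
        · exact absurd hb hi'
        · right; rw [Equiv.swap_apply_of_ne_of_ne hbi hbi']; exact ⟨hbi, hb⟩
      · rintro (rfl | ⟨ha, haS⟩)
        · exact ⟨i, hi, Equiv.swap_apply_left _ _⟩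
        · refine ⟨a, haS, ?_⟩
          rw [Equiv.swap_apply_of_ne_of_ne ha (by rintro rfl; exact hi' haS)]
    rw [h1, ← hsym (S.erase i) (Finset.notMem_erase _ _)
        (fun h => hi' (Finset.mem_of_mem_erase h)), Finset.insert_erase hi]
  · -- i ∉ S, i' ∈ S
    have h1 : S.image (Equiv.swap i i') = insert i (S.erase i') := by
      ext a
      simp only [Finset.mem_image, Finset.mem_insert, Finset.mem_erase]
      constructor
      · rintro ⟨b, hb, rfl⟩
        rcases eq_or_ne b i with rfl | hbi
        · exact absurd hb hi
        rcases eq_or_ne b i' with rfl | hbi'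
        · left; simp [Equiv.swap_apply_right]
        · right; rw [Equiv.swap_apply_of_ne_of_ne hbi hbi']; exact ⟨hbi', hb⟩
      · rintro (rfl | ⟨ha, haS⟩)
        · exact ⟨i', hi', Equiv.swap_apply_right _ _⟩
        · refine ⟨a, haS, ?_⟩
          rw [Equiv.swap_apply_of_ne_of_ne (by rintro rfl; exact hi haS) ha]
    rw [h1, hsym (S.erase i') (fun h => hi (Finset.mem_of_mem_erase h))
        (Finset.notMem_erase _ _), Finset.insert_erase hi']
  · -- neither
    have h1 : S.image (Equiv.swap i i') = S := by
      rw [Finset.image_congr (g := id), Finset.image_id]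
      intro a ha
      exact Equiv.swap_apply_of_ne_of_ne (fun h => hi (h ▸ ha)) (fun h => hi' (h ▸ ha))
    rw [h1]

lemma aux_mlext_comp (e : Equiv.Perm (Fin n)) (hF : ∀ S, F (S.image e) = F S)
    (y : Fin n → ℝ) : mlext n F (y ∘ e) = mlext n F y := by
  unfold mlext
  refine Fintype.sum_equiv e.finsetCongr _ _ (fun S => ?_)
  have hmap : ∀ (A : Finset (Fin n)), (A.map e.toEmbedding)ᶜ = Aᶜ.map e.toEmbedding := by
    intro A
    ext a
    simp [Finset.mem_map_equiv]
  simp only [Equiv.finsetCongr_apply, hmap, Finset.prod_map, Equiv.coe_toEmbedding,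
    Function.comp_apply]
  rw [show S.map e.toEmbedding = S.image e from (Finset.map_eq_image _ _).trans rfl, hF]

lemma aux_pd_swap (hii' : i ≠ i')
    (hsym : ∀ S : Finset (Fin n), i ∉ S → i' ∉ S → F (insert i S) = F (insert i' S))
    (x : Fin n → ℝ) (hx : x i = x i') :
    partialDeriv1 n i (mlext n F) x = partialDeriv1 n i' (mlext n F) x := by
  set e := Equiv.swap i i' with he
  have hxe : ∀ j, x (e j) = x j := by
    intro j
    rcases eq_or_ne j i with rfl | hji
    · simp [he, Equiv.swap_apply_left, hx]
    rcases eq_or_ne j i' with rfl | hji'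
    · simp [he, Equiv.swap_apply_right, hx]
    · rw [he, Equiv.swap_apply_of_ne_of_ne hji hji']
  have hupdate : ∀ t, (Function.update x i' t) ∘ e = Function.update x i t := by
    intro t
    funext j
    simp only [Function.comp_apply]
    rcases eq_or_ne j i with rfl | hji
    · rw [he, Equiv.swap_apply_left, Function.update_self, Function.update_self]
    rcases eq_or_ne j i' with rfl | hji'
    · rw [he, Equiv.swap_apply_right, Function.update_of_ne hii',
        Function.update_of_ne hii'.symm]
      exact hx
    · rw [he, Equiv.swap_apply_of_ne_of_ne hji hji', Function.update_of_ne hji',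
        Function.update_of_ne hji]
  have hkey : ∀ t, mlext n F (Function.update x i t) = mlext n F (Function.update x i' t) := by
    intro t
    rw [← hupdate t, aux_mlext_comp e (aux_F_swap hii' hsym)]
  unfold partialDeriv1
  simp only [hkey]
  rw [hx]

end aux

theorem stmt14 (n : ℕ) (F : Finset (Fin n) → ℝ) (T : ℝ) (hT : 0 < T)
    (i i' : Fin n) (hii' : i ≠ i')
    (hsym : ∀ S : Finset (Fin n), i ∉ S → i' ∉ S → F (insert i S) = F (insert i' S))
    (c : ℝ) (hc : c ∈ Set.Ioo (0:ℝ) 1) :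
    (∀ k : ℕ, mfi n F T (fun _ => c) k i = mfi n F T (fun _ => c) k i') ∧
      (∀ K : ℕ, T * logit (mfi n F T (fun _ => c) K i) =
        T * logit (mfi n F T (fun _ => c) K i')) := by
  have hmain : ∀ k : ℕ, mfi n F T (fun _ => c) k i = mfi n F T (fun _ => c) k i' := by
    intro k
    induction k with
    | zero => rfl
    | succ k ih =>
      show sigmoid _ = sigmoid _
      rw [aux_pd_swap hii' hsym _ ih]
  exact ⟨hmain, fun K => by rw [hmain K]⟩
end
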